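/- Conditional version of the IPW identity: under consistency, unconfoundedness, exclusion restriction, and positivity, for almost every x: μ2(x) := E[Z1·Y/E[Z1|Z2,X] | X=x] − E[(1−Z1)·Y/E[1−Z1|Z2,X] | X=x] = τ(x) + Σ_{b∈{0,1}} (h(1,b,x) − h(0,b,x))·P(Z2=b | X=x), where τ(x) = E[Y(1)−Y(0)|X=x] and h(a,b,x) = E[E[Y(a)|X,U] − E[Y(a)|X] | Z1=a, Z2=b, X=x]. -/

import Mathlib

/-!
All quantities live on the atom `{X = x}`, which `Z2` splits into two strata and `Z1` further into
cells. On the stratum `{Z2 = b, X = x}` the propensity score `E[Z1 | Z2, X]` is the constant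
`p_b = P(Z1 = 1 | Z2 = b, X = x)`, so the weights `1 / p_b` and `1 / (1 - p_b)` cancel the cell
sizes and the IPW contrast integrates over the stratum to
`(E[Y(1) | Z1 = 1, Z2 = b, X = x] - E[Y(0) | Z1 = 0, Z2 = b, X = x]) · P(Z2 = b, X = x)`.
The stratum is `σ(Z2, X, U)`-measurable and `Z1` is independent of `(Y(1), Y(0))` given
`σ(Z2, X, U)`, so integrating `Y(a)` over the cell `{Z1 = a}` of the stratum is the same as
integrating `E[Y(a) | Z2, X, U]`, which is `E[Y(a) | X, U]` by exclusion. Subtracting the constant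
`E[Y(a) | X = x]` turns the cell means into `h(a, b, x)`; summing over the strata gives the
identity.
-/

open MeasureTheory ProbabilityTheory

/-- Conditional mean of `f` given the event `A`: `E[f | A]`. -/
noncomputable def condMeanOn {Ω : Type*} [MeasurableSpace Ω]
    (μ : Measure Ω) (A : Set Ω) (f : Ω → ℝ) : ℝ :=
  (∫ ω in A, f ω ∂μ) / (μ A).toReal

/-- The σ-algebra generated by two real-valued functions, e.g. `σ(X, U)`. -/
def sigma2 {Ω : Type*} (f g : Ω → ℝ) : MeasurableSpace Ω :=
  MeasurableSpace.comap f inferInstance ⊔ MeasurableSpace.comap g inferInstance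

/-- The σ-algebra generated by three real-valued functions, e.g. `σ(Z2, X, U)`. -/
def sigma3 {Ω : Type*} (f g h : Ω → ℝ) : MeasurableSpace Ω :=
  MeasurableSpace.comap f inferInstance ⊔ MeasurableSpace.comap g inferInstance
    ⊔ MeasurableSpace.comap h inferInstance

section CondMeanOn

variable {Ω : Type*} [MeasurableSpace Ω] {μ : Measure Ω} {A : Set Ω} {f g : Ω → ℝ}

lemma condMeanOn_sub (hf : IntegrableOn f A μ) (hg : IntegrableOn g A μ) :
    condMeanOn μ A (fun ω => f ω - g ω) = condMeanOn μ A f - condMeanOn μ A g := by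
  rw [condMeanOn, integral_sub hf hg, sub_div]; rfl

lemma setIntegral_eq_condMeanOn_mul [IsFiniteMeasure μ] (hA : μ A ≠ 0) :
    ∫ ω in A, f ω ∂μ = condMeanOn μ A f * μ.real A :=
  (div_mul_cancel₀ _ ((measureReal_ne_zero_iff).2 hA)).symm

lemma condMeanOn_eq_of_eqOn_const [IsFiniteMeasure μ] {c : ℝ} (hA : MeasurableSet A)
    (hA0 : μ A ≠ 0) (hf : ∀ ω ∈ A, f ω = c) : condMeanOn μ A f = c := by
  rw [condMeanOn, setIntegral_congr_fun hA hf, setIntegral_const, smul_eq_mul, ← measureReal_def,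
    mul_div_cancel_left₀ _ ((measureReal_ne_zero_iff).2 hA0)]

end CondMeanOn

section BinarySplit

variable {Ω : Type*} {Z : Ω → ℝ}

lemma setOf_eq_one_inter_union_setOf_eq_zero_inter (hZ : ∀ ω, Z ω = 0 ∨ Z ω = 1) (S : Set Ω) :
    ({ω | Z ω = 1} ∩ S) ∪ ({ω | Z ω = 0} ∩ S) = S := by
  rw [← Set.union_inter_distrib_right, Set.inter_eq_right]
  intro ω _
  rcases hZ ω with h | h <;> simp [h]

lemma disjoint_setOf_eq_one_inter_setOf_eq_zero_inter (S : Set Ω) :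
    Disjoint ({ω | Z ω = 1} ∩ S) ({ω | Z ω = 0} ∩ S) :=
  ((Set.disjoint_singleton.2 one_ne_zero).preimage Z).mono Set.inter_subset_left
    Set.inter_subset_left

variable [MeasurableSpace Ω] {μ : Measure Ω} {S : Set Ω}

lemma measureReal_eq_add_of_binary [IsFiniteMeasure μ] (hZm : Measurable Z)
    (hZ : ∀ ω, Z ω = 0 ∨ Z ω = 1) (hS : MeasurableSet S) :
    μ.real S = μ.real ({ω | Z ω = 1} ∩ S) + μ.real ({ω | Z ω = 0} ∩ S) := by
  conv_lhs => rw [← setOf_eq_one_inter_union_setOf_eq_zero_inter hZ S]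
  exact measureReal_union (disjoint_setOf_eq_one_inter_setOf_eq_zero_inter S)
    ((hZm (measurableSet_singleton 0)).inter hS)

lemma setIntegral_eq_add_of_binary {F : Ω → ℝ} (hZm : Measurable Z)
    (hZ : ∀ ω, Z ω = 0 ∨ Z ω = 1) (hS : MeasurableSet S)
    (h1 : IntegrableOn F ({ω | Z ω = 1} ∩ S) μ) (h0 : IntegrableOn F ({ω | Z ω = 0} ∩ S) μ) :
    ∫ ω in S, F ω ∂μ = ∫ ω in {ω | Z ω = 1} ∩ S, F ω ∂μ + ∫ ω in {ω | Z ω = 0} ∩ S, F ω ∂μ := by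
  conv_lhs => rw [← setOf_eq_one_inter_union_setOf_eq_zero_inter hZ S]
  exact setIntegral_union (disjoint_setOf_eq_one_inter_setOf_eq_zero_inter S)
    ((hZm (measurableSet_singleton 0)).inter hS) h1 h0

lemma measureReal_setOf_eq_one_inter_eq_condMeanOn_mul [IsFiniteMeasure μ] (hZm : Measurable Z)
    (hZ : ∀ ω, Z ω = 0 ∨ Z ω = 1) (hS : MeasurableSet S) (hS0 : μ S ≠ 0) :
    μ.real ({ω | Z ω = 1} ∩ S) = condMeanOn μ S Z * μ.real S := by
  have hA1 : MeasurableSet ({ω | Z ω = 1} ∩ S) := (hZm (measurableSet_singleton 1)).inter hS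
  have hA0 : MeasurableSet ({ω | Z ω = 0} ∩ S) := (hZm (measurableSet_singleton 0)).inter hS
  have hZ1 : Set.EqOn (fun _ => 1) Z ({ω | Z ω = 1} ∩ S) := fun ω h => h.1.symm
  have hZ0 : Set.EqOn (fun _ => 0) Z ({ω | Z ω = 0} ∩ S) := fun ω h => h.1.symm
  rw [← setIntegral_eq_condMeanOn_mul hS0, setIntegral_eq_add_of_binary hZm hZ hS
    ((integrableOn_const (C := (1 : ℝ))).congr_fun hZ1 hA1)
    ((integrableOn_const (C := (0 : ℝ))).congr_fun hZ0 hA0), ← setIntegral_congr_fun hA1 hZ1,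
    ← setIntegral_congr_fun hA0 hZ0]
  simp

end BinarySplit

lemma condExp_comap_apply_eq_condMeanOn {Ω β : Type*} [MeasurableSpace Ω]
    [MeasurableSpace β] [MeasurableSingletonClass β] {μ : Measure Ω} [IsFiniteMeasure μ]
    {g : Ω → β} (hg : Measurable g) {f : Ω → ℝ} (hf : Integrable f μ) {y : β}
    (hy : μ ({ω | g ω = y}) ≠ 0) {ω : Ω} (hω : g ω = y) :
    (μ[f | MeasurableSpace.comap g inferInstance]) ω = condMeanOn μ ({ω | g ω = y}) f := by
  have hS : MeasurableSet[MeasurableSpace.comap g inferInstance] ({ω | g ω = y}) :=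
    ⟨{y}, measurableSet_singleton y, rfl⟩
  rw [condMeanOn, ← setIntegral_condExp hg.comap_le hf hS]
  refine (condMeanOn_eq_of_eqOn_const (hg.comap_le _ hS) hy fun ω' hω' => ?_).symm
  exact stronglyMeasurable_condExp.factorsThrough (hω'.trans hω.symm)

lemma condExp_comap_sup_comap_apply_eq_condMeanOn {Ω β γ : Type*} [MeasurableSpace Ω]
    [MeasurableSpace β] [MeasurableSingletonClass β] [MeasurableSpace γ]
    [MeasurableSingletonClass γ] {μ : Measure Ω} [IsFiniteMeasure μ] {g₁ : Ω → β} {g₂ : Ω → γ}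
    (hg₁ : Measurable g₁) (hg₂ : Measurable g₂) {f : Ω → ℝ} (hf : Integrable f μ) {y₁ : β} {y₂ : γ}
    (hy : μ ({ω | g₁ ω = y₁} ∩ {ω | g₂ ω = y₂}) ≠ 0) {ω : Ω}
    (hω : ω ∈ {ω | g₁ ω = y₁} ∩ {ω | g₂ ω = y₂}) :
    (μ[f | MeasurableSpace.comap g₁ inferInstance ⊔ MeasurableSpace.comap g₂ inferInstance]) ω
      = condMeanOn μ ({ω | g₁ ω = y₁} ∩ {ω | g₂ ω = y₂}) f := by
  have hset : {ω | (g₁ ω, g₂ ω) = (y₁, y₂)} = {ω | g₁ ω = y₁} ∩ {ω | g₂ ω = y₂} := by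
    ext; simp
  rw [← MeasurableSpace.comap_prodMk, ← hset]
  exact condExp_comap_apply_eq_condMeanOn (hg₁.prodMk hg₂) hf (hset ▸ hy) (Prod.ext hω.1 hω.2)

section CondIndep

variable {Ω : Type*} {m mΩ : MeasurableSpace Ω} {μ : Measure Ω}

lemma sup_eq_generateFrom_inter (m₁ m₂ : MeasurableSpace Ω) :
    m₁ ⊔ m₂ = MeasurableSpace.generateFrom
      {S | ∃ A B, MeasurableSet[m₁] A ∧ MeasurableSet[m₂] B ∧ A ∩ B = S} := by
  refine le_antisymm (sup_le (fun A hA => ?_) (fun B hB => ?_)) (MeasurableSpace.generateFrom_le ?_)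
  · exact MeasurableSpace.measurableSet_generateFrom ⟨A, Set.univ, hA, .univ, Set.inter_univ A⟩
  · exact MeasurableSpace.measurableSet_generateFrom ⟨Set.univ, B, .univ, hB, Set.univ_inter B⟩
  · rintro _ ⟨A, B, hA, hB, rfl⟩
    exact (le_sup_left (b := m₂) A hA).inter (le_sup_right (a := m₁) B hB)

lemma isPiSystem_inter_measurableSet (m₁ m₂ : MeasurableSpace Ω) :
    IsPiSystem {S | ∃ A B, MeasurableSet[m₁] A ∧ MeasurableSet[m₂] B ∧ A ∩ B = S} := by
  rintro _ ⟨A₁, B₁, hA₁, hB₁, rfl⟩ _ ⟨A₂, B₂, hA₂, hB₂, rfl⟩ -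
  exact ⟨A₁ ∩ A₂, B₁ ∩ B₂, hA₁.inter hA₂, hB₁.inter hB₂, Set.inter_inter_inter_comm _ _ _ _⟩

lemma setIntegral_eq_setIntegral_of_isPiSystem (hm : m ≤ mΩ) {P : Set (Set Ω)}
    (h_eq : m = MeasurableSpace.generateFrom P) (hP : IsPiSystem P) {f g : Ω → ℝ}
    (hf : Integrable f μ) (hg : Integrable g μ) (h_univ : ∫ ω, f ω ∂μ = ∫ ω, g ω ∂μ)
    (basic : ∀ S ∈ P, ∫ ω in S, f ω ∂μ = ∫ ω in S, g ω ∂μ) {S : Set Ω}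
    (hS : MeasurableSet[m] S) : ∫ ω in S, f ω ∂μ = ∫ ω in S, g ω ∂μ := by
  induction S, hS using MeasurableSpace.induction_on_inter h_eq hP with
  | empty => simp
  | basic S hS => exact basic S hS
  | compl S hS ih =>
    have hf' := integral_add_compl (hm S hS) hf
    have hg' := integral_add_compl (hm S hS) hg
    linarith
  | iUnion F hF_disj hF ih =>
    rw [integral_iUnion (fun i => hm _ (hF i)) hF_disj hf.integrableOn,
      integral_iUnion (fun i => hm _ (hF i)) hF_disj hg.integrableOn]
    exact tsum_congr ih

variable [IsFiniteMeasure μ]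

lemma setIntegral_inter_eq_setIntegral_mul_condExp (hm : m ≤ mΩ) {g : Ω → ℝ}
    (hgm : StronglyMeasurable[m] g) (hg : Integrable g μ) {B C : Set Ω} (hB : MeasurableSet[m] B)
    (hC : MeasurableSet[mΩ] C) :
    ∫ ω in B ∩ C, g ω ∂μ = ∫ ω in B, g ω * (μ⟦C | m⟧) ω ∂μ := by
  have hgC : (g * C.indicator fun _ => (1 : ℝ)) = C.indicator g := by
    ext ω; by_cases h : ω ∈ C <;> simp [h]
  rw [← setIntegral_indicator hC, ← setIntegral_condExp hm (hg.indicator hC) hB, ← hgC]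
  refine setIntegral_congr_ae (hm B hB) ?_
  filter_upwards [condExp_mul_of_stronglyMeasurable_left hgm (hgC ▸ hg.indicator hC)
    ((integrable_const 1).indicator hC)] with ω hω _
  exact hω

lemma setIntegral_mul_eq_setIntegral_condExp_mul (hm : m ≤ mΩ) {f q : Ω → ℝ}
    (hf : Integrable f μ) (hq : StronglyMeasurable[m] q) {c : ℝ} (hqc : ∀ᵐ ω ∂μ, ‖q ω‖ ≤ c)
    {B : Set Ω} (hB : MeasurableSet[m] B) :
    ∫ ω in B, f ω * q ω ∂μ = ∫ ω in B, (μ[f | m]) ω * q ω ∂μ := by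
  simp_rw [mul_comm _ (q _)]
  rw [← setIntegral_condExp hm ((hf.bdd_mul (hq.mono hm).aestronglyMeasurable hqc)) hB]
  refine setIntegral_congr_ae (hm B hB) ?_
  filter_upwards [condExp_stronglyMeasurable_mul_of_bound hm hq hf c hqc] with ω hω _
  exact hω

variable [StandardBorelSpace Ω] {β β' : Type*} [MeasurableSpace β] [MeasurableSpace β']
  {W : Ω → β} {Z : Ω → β'}

lemma condExp_indicator_sup_comap_ae_eq_of_condIndepFun (hm : m ≤ mΩ) (hW : Measurable W)
    (hZ : Measurable Z) (hindep : CondIndepFun m hm W Z μ) {s : Set β'} (hs : MeasurableSet s) :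
    μ⟦Z ⁻¹' s | m ⊔ MeasurableSpace.comap W inferInstance⟧ =ᵐ[μ] μ⟦Z ⁻¹' s | m⟧ := by
  have hM : m ⊔ MeasurableSpace.comap W inferInstance ≤ mΩ := sup_le hm hW.comap_le
  have hC : Integrable ((Z ⁻¹' s).indicator fun _ => (1 : ℝ)) μ :=
    (integrable_const 1).indicator (hZ hs)
  refine (ae_eq_condExp_of_forall_setIntegral_eq hM hC
    (fun _ _ _ => integrable_condExp.integrableOn) (fun S hS _ => ?_)
    (stronglyMeasurable_condExp.mono
      (le_sup_left : m ≤ m ⊔ MeasurableSpace.comap W inferInstance)).aestronglyMeasurable).symm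
  refine setIntegral_eq_setIntegral_of_isPiSystem hM (sup_eq_generateFrom_inter _ _)
    (isPiSystem_inter_measurableSet _ _) integrable_condExp hC (integral_condExp hm) ?_ hS
  rintro _ ⟨B, _, hB, ⟨t, ht, rfl⟩, rfl⟩
  calc ∫ ω in B ∩ W ⁻¹' t, (μ⟦Z ⁻¹' s | m⟧) ω ∂μ
      = ∫ ω in B, (μ⟦Z ⁻¹' s | m⟧) ω * (μ⟦W ⁻¹' t | m⟧) ω ∂μ :=
        setIntegral_inter_eq_setIntegral_mul_condExp hm stronglyMeasurable_condExp
          integrable_condExp hB (hW ht)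
    _ = ∫ ω in B, (μ⟦W ⁻¹' t ∩ Z ⁻¹' s | m⟧) ω ∂μ := by
        refine setIntegral_congr_ae (hm B hB) ?_
        filter_upwards [(condIndepFun_iff_condExp_inter_preimage_eq_mul hW hZ).1 hindep t s ht hs]
          with ω hω _
        rw [hω, mul_comm]
    _ = ∫ ω in B ∩ W ⁻¹' t, ((Z ⁻¹' s).indicator fun _ => (1 : ℝ)) ω ∂μ := by
        rw [setIntegral_condExp hm ((integrable_const 1).indicator ((hW ht).inter (hZ hs))) hB,
          setIntegral_indicator ((hW ht).inter (hZ hs)), setIntegral_indicator (hZ hs),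
          Set.inter_assoc]

lemma setIntegral_preimage_inter_eq_setIntegral_condExp_of_condIndepFun (hm : m ≤ mΩ)
    (hW : Measurable W) (hZ : Measurable Z) (hindep : CondIndepFun m hm W Z μ) {f : Ω → ℝ}
    (hf : Integrable f μ) (hfW : StronglyMeasurable[MeasurableSpace.comap W inferInstance] f)
    {B : Set Ω} (hB : MeasurableSet[m] B) {s : Set β'} (hs : MeasurableSet s) :
    ∫ ω in Z ⁻¹' s ∩ B, f ω ∂μ = ∫ ω in Z ⁻¹' s ∩ B, (μ[f | m]) ω ∂μ := by
  have hbound : ∀ᵐ ω ∂μ, ‖(μ⟦Z ⁻¹' s | m⟧) ω‖ ≤ 1 := by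
    refine ae_bdd_norm_condExp_of_ae_bdd_norm (.of_forall fun ω => ?_)
    by_cases h : ω ∈ Z ⁻¹' s <;> simp [h]
  rw [Set.inter_comm]
  calc ∫ ω in B ∩ Z ⁻¹' s, f ω ∂μ
      = ∫ ω in B, f ω * (μ⟦Z ⁻¹' s | m ⊔ MeasurableSpace.comap W inferInstance⟧) ω ∂μ :=
        setIntegral_inter_eq_setIntegral_mul_condExp (sup_le hm hW.comap_le)
          (hfW.mono le_sup_right) hf (le_sup_left (b := MeasurableSpace.comap W inferInstance) B hB)
          (hZ hs)
    _ = ∫ ω in B, f ω * (μ⟦Z ⁻¹' s | m⟧) ω ∂μ := by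
        refine setIntegral_congr_ae (hm B hB) ?_
        filter_upwards [condExp_indicator_sup_comap_ae_eq_of_condIndepFun hm hW hZ hindep hs]
          with ω hω _
        rw [hω]
    _ = ∫ ω in B, (μ[f | m]) ω * (μ⟦Z ⁻¹' s | m⟧) ω ∂μ :=
        setIntegral_mul_eq_setIntegral_condExp_mul hm hf stronglyMeasurable_condExp hbound hB
    _ = ∫ ω in B ∩ Z ⁻¹' s, (μ[f | m]) ω ∂μ :=
        (setIntegral_inter_eq_setIntegral_mul_condExp hm stronglyMeasurable_condExp
          integrable_condExp hB (hZ hs)).symm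

end CondIndep

lemma ipw_setIntegral_of_eqOn_condMeanOn {Ω : Type*} [MeasurableSpace Ω] {μ : Measure Ω}
    [IsFiniteMeasure μ] {Z Y1 Y0 Y e : Ω → ℝ} {S : Set Ω} (hZm : Measurable Z)
    (hZ : ∀ ω, Z ω = 0 ∨ Z ω = 1) (hS : MeasurableSet S) (hY1 : Integrable Y1 μ)
    (hY0 : Integrable Y0 μ) (hcons : ∀ ω, Y ω = Z ω * Y1 ω + (1 - Z ω) * Y0 ω)
    (he : ∀ ω ∈ S, e ω = condMeanOn μ S Z)
    (h1 : μ ({ω | Z ω = 1} ∩ S) ≠ 0) (h0 : μ ({ω | Z ω = 0} ∩ S) ≠ 0) :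
    IntegrableOn (fun ω => Z ω * Y ω / e ω - (1 - Z ω) * Y ω / (1 - e ω)) S μ ∧
      ∫ ω in S, (Z ω * Y ω / e ω - (1 - Z ω) * Y ω / (1 - e ω)) ∂μ
        = (condMeanOn μ ({ω | Z ω = 1} ∩ S) Y1 - condMeanOn μ ({ω | Z ω = 0} ∩ S) Y0)
          * μ.real S := by
  set p := condMeanOn μ S Z
  have hA1 : MeasurableSet ({ω | Z ω = 1} ∩ S) := (hZm (measurableSet_singleton 1)).inter hS
  have hA0 : MeasurableSet ({ω | Z ω = 0} ∩ S) := (hZm (measurableSet_singleton 0)).inter hS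
  have hS0 : μ S ≠ 0 := fun h => h1 (measure_mono_null Set.inter_subset_right h)
  have hp : μ.real ({ω | Z ω = 1} ∩ S) = p * μ.real S :=
    measureReal_setOf_eq_one_inter_eq_condMeanOn_mul hZm hZ hS hS0
  have hq : μ.real ({ω | Z ω = 0} ∩ S) = (1 - p) * μ.real S := by
    rw [sub_mul, one_mul, ← hp, measureReal_eq_add_of_binary hZm hZ hS]
    ring
  have hp0 : p ≠ 0 := fun h => (measureReal_ne_zero_iff).2 h1 (by rw [hp, h, zero_mul])
  have hq0 : 1 - p ≠ 0 := fun h => (measureReal_ne_zero_iff).2 h0 (by rw [hq, h, zero_mul])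
  have hF1 : Set.EqOn (fun ω => Y1 ω / p)
      (fun ω => Z ω * Y ω / e ω - (1 - Z ω) * Y ω / (1 - e ω)) ({ω | Z ω = 1} ∩ S) := by
    rintro ω ⟨hZω : Z ω = 1, hω⟩
    simp [hcons, hZω, he ω hω]
  have hF0 : Set.EqOn (fun ω => -(Y0 ω / (1 - p)))
      (fun ω => Z ω * Y ω / e ω - (1 - Z ω) * Y ω / (1 - e ω)) ({ω | Z ω = 0} ∩ S) := by
    rintro ω ⟨hZω : Z ω = 0, hω⟩
    simp [hcons, hZω, he ω hω]
  have hint1 := (hY1.div_const p).integrableOn.congr_fun hF1 hA1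
  have hint0 := (hY0.div_const (1 - p)).neg.integrableOn.congr_fun hF0 hA0
  refine ⟨setOf_eq_one_inter_union_setOf_eq_zero_inter hZ S ▸ hint1.union hint0, ?_⟩
  rw [setIntegral_eq_add_of_binary hZm hZ hS hint1 hint0, ← setIntegral_congr_fun hA1 hF1,
    ← setIntegral_congr_fun hA0 hF0, integral_neg,
    integral_div, integral_div, setIntegral_eq_condMeanOn_mul h1, setIntegral_eq_condMeanOn_mul h0,
    hp, hq]
  field_simp
  ring

lemma measurableSet_sigma3_setOf_eq_inter_setOf_eq {Ω : Type*} (Z2 X U : Ω → ℝ) (b x : ℝ) :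
    MeasurableSet[sigma3 Z2 X U] ({ω | Z2 ω = b} ∩ {ω | X ω = x}) :=
  ((le_sup_left.trans le_sup_left : MeasurableSpace.comap Z2 inferInstance ≤ sigma3 Z2 X U) _
    ⟨{b}, measurableSet_singleton b, rfl⟩).inter
  ((le_sup_right.trans le_sup_left : MeasurableSpace.comap X inferInstance ≤ sigma3 Z2 X U) _
    ⟨{x}, measurableSet_singleton x, rfl⟩)

lemma condMeanOn_condExp_sub_condExp_eq_of_condIndepFun {Ω β γ : Type*}
    {m n mΩ : MeasurableSpace Ω} [StandardBorelSpace Ω] {μ : Measure Ω} [IsFiniteMeasure μ]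
    [MeasurableSpace β] [MeasurableSpace γ] [MeasurableSingletonClass γ] (hm : m ≤ mΩ)
    {W : Ω → β} {Z : Ω → ℝ} (hW : Measurable W) (hZ : Measurable Z)
    (hindep : CondIndepFun m hm W Z μ) {f : Ω → ℝ} (hf : Integrable f μ)
    (hfW : StronglyMeasurable[MeasurableSpace.comap W inferInstance] f)
    (hexcl : μ[f | m] =ᵐ[μ] μ[f | n]) {g : Ω → γ} (hg : Measurable g) {y : γ} {B : Set Ω}
    (hB : MeasurableSet[m] B) (hBg : B ⊆ {ω | g ω = y}) {a : ℝ}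
    (hA : μ ({ω | Z ω = a} ∩ B) ≠ 0) :
    condMeanOn μ ({ω | Z ω = a} ∩ B)
        (fun ω => (μ[f | n]) ω - (μ[f | MeasurableSpace.comap g inferInstance]) ω)
      = condMeanOn μ ({ω | Z ω = a} ∩ B) f - condMeanOn μ {ω | g ω = y} f := by
  have hAm : MeasurableSet ({ω | Z ω = a} ∩ B) := (hZ (measurableSet_singleton a)).inter (hm B hB)
  have hAg : {ω | Z ω = a} ∩ B ⊆ {ω | g ω = y} := Set.inter_subset_right.trans hBg
  rw [condMeanOn_sub integrable_condExp.integrableOn integrable_condExp.integrableOn,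
    condMeanOn_eq_of_eqOn_const hAm hA fun ω hω =>
      condExp_comap_apply_eq_condMeanOn hg hf (fun h => hA (measure_mono_null hAg h)) (hAg hω),
    condMeanOn, condMeanOn]
  congr 2
  exact ((setIntegral_preimage_inter_eq_setIntegral_condExp_of_condIndepFun hm hW hZ hindep hf hfW
    hB (measurableSet_singleton a)).trans
      (setIntegral_congr_ae hAm (hexcl.mono fun ω h _ => h))).symm

theorem ipw_conditional_identity_general
    {Ω : Type*} [mΩ : MeasurableSpace Ω] [StandardBorelSpace Ω]
    (μ : Measure Ω) [IsProbabilityMeasure μ]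
    (Z1 Z2 X U Y1 Y0 Y : Ω → ℝ) (x : ℝ)
    (hZ1 : Measurable Z1) (hZ2 : Measurable Z2) (hX : Measurable X)
    (hY1m : Measurable Y1) (hY0m : Measurable Y0)
    (hZ1bin : ∀ ω, Z1 ω = 0 ∨ Z1 ω = 1) (hZ2bin : ∀ ω, Z2 ω = 0 ∨ Z2 ω = 1)
    (hY1int : Integrable Y1 μ) (hY0int : Integrable Y0 μ)
    -- consistency
    (hcons : ∀ ω, Y ω = Z1 ω * Y1 ω + (1 - Z1 ω) * Y0 ω)
    (hle : sigma3 Z2 X U ≤ mΩ)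
    -- unconfoundedness: {Y(1), Y(0)} ⫫ Z1 | X, Z2, U
    (hunconf : CondIndepFun (sigma3 Z2 X U) hle (fun ω => (Y1 ω, Y0 ω)) Z1 μ)
    -- exclusion restriction for both potential outcomes
    (hexcl1 : μ[Y1 | sigma3 Z2 X U] =ᵐ[μ] μ[Y1 | sigma2 X U])
    (hexcl0 : μ[Y0 | sigma3 Z2 X U] =ᵐ[μ] μ[Y0 | sigma2 X U])
    -- positive conditional probabilities at X = x
    (hx : 0 < μ {ω | X ω = x})
    (hcells : ∀ a b : ℝ, (a = 0 ∨ a = 1) → (b = 0 ∨ b = 1) →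
      0 < μ {ω | Z1 ω = a ∧ Z2 ω = b ∧ X ω = x}) :
    condMeanOn μ {ω | X ω = x}
        (fun ω => Z1 ω * Y ω / (μ[Z1 | sigma2 Z2 X]) ω
          - (1 - Z1 ω) * Y ω / (1 - (μ[Z1 | sigma2 Z2 X]) ω))
      = condMeanOn μ {ω | X ω = x} (fun ω => Y1 ω - Y0 ω)
        + ((condMeanOn μ {ω | Z1 ω = 1 ∧ Z2 ω = 0 ∧ X ω = x}
              (fun ω => (μ[Y1 | sigma2 X U]) ω
                - (μ[Y1 | MeasurableSpace.comap X inferInstance]) ω)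
            - condMeanOn μ {ω | Z1 ω = 0 ∧ Z2 ω = 0 ∧ X ω = x}
              (fun ω => (μ[Y0 | sigma2 X U]) ω
                - (μ[Y0 | MeasurableSpace.comap X inferInstance]) ω))
            * ((μ {ω | Z2 ω = 0 ∧ X ω = x}).toReal / (μ {ω | X ω = x}).toReal)
          + (condMeanOn μ {ω | Z1 ω = 1 ∧ Z2 ω = 1 ∧ X ω = x}
              (fun ω => (μ[Y1 | sigma2 X U]) ω
                - (μ[Y1 | MeasurableSpace.comap X inferInstance]) ω)
            - condMeanOn μ {ω | Z1 ω = 0 ∧ Z2 ω = 1 ∧ X ω = x}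
              (fun ω => (μ[Y0 | sigma2 X U]) ω
                - (μ[Y0 | MeasurableSpace.comap X inferInstance]) ω))
            * ((μ {ω | Z2 ω = 1 ∧ X ω = x}).toReal / (μ {ω | X ω = x}).toReal)) := by
  simp only [Set.ofPred_and] at hcells ⊢
  have hcell_ne a b (ha : a = 0 ∨ a = 1) (hb : b = 0 ∨ b = 1) := (hcells a b ha hb).ne'
  have hstratum b := measurableSet_sigma3_setOf_eq_inter_setOf_eq Z2 X U b x
  have hSx : MeasurableSet {ω | X ω = x} := hX (measurableSet_singleton x)
  have hZ1int : Integrable Z1 μ := .of_bound hZ1.aestronglyMeasurable 1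
    (.of_forall fun ω => by rcases hZ1bin ω with h | h <;> simp [h])
  have hW : Measurable fun ω => (Y1 ω, Y0 ω) := hY1m.prodMk hY0m
  have hh1 b hb := condMeanOn_condExp_sub_condExp_eq_of_condIndepFun hle hW hZ1 hunconf hY1int
    (measurable_fst.comp (comap_measurable _)).stronglyMeasurable hexcl1 hX (hstratum b)
    Set.inter_subset_right (hcell_ne 1 b (.inr rfl) hb)
  have hh0 b hb := condMeanOn_condExp_sub_condExp_eq_of_condIndepFun hle hW hZ1 hunconf hY0int
    (measurable_snd.comp (comap_measurable _)).stronglyMeasurable hexcl0 hX (hstratum b)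
    Set.inter_subset_right (hcell_ne 0 b (.inl rfl) hb)
  have hipw b hb := ipw_setIntegral_of_eqOn_condMeanOn (e := μ[Z1 | sigma2 Z2 X]) hZ1 hZ1bin
    (hle _ (hstratum b)) hY1int hY0int hcons
    (fun ω hω => condExp_comap_sup_comap_apply_eq_condMeanOn hZ2 hX hZ1int
      (fun h => hcell_ne 1 b (.inr rfl) hb (measure_mono_null Set.inter_subset_right h)) hω)
    (hcell_ne 1 b (.inr rfl) hb) (hcell_ne 0 b (.inl rfl) hb)
  obtain ⟨hF1, hI1⟩ := hipw 1 (.inr rfl)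
  obtain ⟨hF0, hI0⟩ := hipw 0 (.inl rfl)
  have hI := (setIntegral_eq_condMeanOn_mul hx.ne').symm.trans
    (setIntegral_eq_add_of_binary hZ2 hZ2bin hSx hF1 hF0)
  rw [hI1, hI0] at hI
  rw [eq_div_of_mul_eq ((measureReal_ne_zero_iff).2 hx.ne') hI,
    condMeanOn_sub hY1int.integrableOn hY0int.integrableOn, hh1 0 (.inl rfl), hh1 1 (.inr rfl),
    hh0 0 (.inl rfl), hh0 1 (.inr rfl), ← measureReal_def, ← measureReal_def, ← measureReal_def]
  field_simp [(measureReal_ne_zero_iff).2 hx.ne']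
  rw [measureReal_eq_add_of_binary hZ2 hZ2bin hSx]
  ring

/-- conditional IPW identity: under consistency, unconfoundedness, exclusion
restriction and positivity, for a fixed `x` with all conditional cells positive,
`μ2(x) := E[Z1·Y/E[Z1|Z2,X] | X=x] − E[(1−Z1)·Y/E[1−Z1|Z2,X] | X=x]
       = τ(x) + Σ_{b∈{0,1}} (h(1,b,x) − h(0,b,x))·P(Z2=b|X=x)`,
where `τ(x) = E[Y(1)−Y(0)|X=x]` and
`h(a,b,x) = E[E[Y(a)|X,U] − E[Y(a)|X] | Z1=a, Z2=b, X=x]`. -/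
theorem ipw_conditional_identity
    {Ω : Type*} [mΩ : MeasurableSpace Ω] [StandardBorelSpace Ω] [Nonempty Ω]
    (μ : Measure Ω) [IsProbabilityMeasure μ]
    (Z1 Z2 X U Y1 Y0 Y : Ω → ℝ) (x : ℝ)
    (hZ1 : Measurable Z1) (hZ2 : Measurable Z2) (hX : Measurable X) (hU : Measurable U)
    (hY1m : Measurable Y1) (hY0m : Measurable Y0)
    (hZ1bin : ∀ ω, Z1 ω = 0 ∨ Z1 ω = 1) (hZ2bin : ∀ ω, Z2 ω = 0 ∨ Z2 ω = 1)
    (hY1int : Integrable Y1 μ) (hY0int : Integrable Y0 μ)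
    -- consistency
    (hcons : ∀ ω, Y ω = Z1 ω * Y1 ω + (1 - Z1 ω) * Y0 ω)
    (hle : sigma3 Z2 X U ≤ mΩ)
    -- unconfoundedness: {Y(1), Y(0)} ⫫ Z1 | X, Z2, U
    (hunconf : CondIndepFun (sigma3 Z2 X U) hle (fun ω => (Y1 ω, Y0 ω)) Z1 μ)
    -- exclusion restriction for both potential outcomes
    (hexcl1 : μ[Y1 | sigma3 Z2 X U] =ᵐ[μ] μ[Y1 | sigma2 X U])
    (hexcl0 : μ[Y0 | sigma3 Z2 X U] =ᵐ[μ] μ[Y0 | sigma2 X U])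
    -- positivity: 0 < E[Z1|Z2,X] < 1 a.s.
    (hpos : ∀ᵐ ω ∂μ, 0 < (μ[Z1 | sigma2 Z2 X]) ω ∧ (μ[Z1 | sigma2 Z2 X]) ω < 1)
    -- positive conditional probabilities at X = x
    (hx : 0 < μ {ω | X ω = x})
    (hcells : ∀ a b : ℝ, (a = 0 ∨ a = 1) → (b = 0 ∨ b = 1) →
      0 < μ {ω | Z1 ω = a ∧ Z2 ω = b ∧ X ω = x}) :
    condMeanOn μ {ω | X ω = x}
        (fun ω => Z1 ω * Y ω / (μ[Z1 | sigma2 Z2 X]) ω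
          - (1 - Z1 ω) * Y ω / (1 - (μ[Z1 | sigma2 Z2 X]) ω))
      = condMeanOn μ {ω | X ω = x} (fun ω => Y1 ω - Y0 ω)
        + ((condMeanOn μ {ω | Z1 ω = 1 ∧ Z2 ω = 0 ∧ X ω = x}
              (fun ω => (μ[Y1 | sigma2 X U]) ω
                - (μ[Y1 | MeasurableSpace.comap X inferInstance]) ω)
            - condMeanOn μ {ω | Z1 ω = 0 ∧ Z2 ω = 0 ∧ X ω = x}
              (fun ω => (μ[Y0 | sigma2 X U]) ω
                - (μ[Y0 | MeasurableSpace.comap X inferInstance]) ω))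
            * ((μ {ω | Z2 ω = 0 ∧ X ω = x}).toReal / (μ {ω | X ω = x}).toReal)
          + (condMeanOn μ {ω | Z1 ω = 1 ∧ Z2 ω = 1 ∧ X ω = x}
              (fun ω => (μ[Y1 | sigma2 X U]) ω
                - (μ[Y1 | MeasurableSpace.comap X inferInstance]) ω)
            - condMeanOn μ {ω | Z1 ω = 0 ∧ Z2 ω = 1 ∧ X ω = x}
              (fun ω => (μ[Y0 | sigma2 X U]) ω
                - (μ[Y0 | MeasurableSpace.comap X inferInstance]) ω))
            * ((μ {ω | Z2 ω = 1 ∧ X ω = x}).toReal / (μ {ω | X ω = x}).toReal)) :=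
  ipw_conditional_identity_general (mΩ := mΩ) μ Z1 Z2 X U Y1 Y0 Y x hZ1 hZ2 hX hY1m hY0m hZ1bin
    hZ2bin hY1int hY0int hcons hle hunconf hexcl1 hexcl0 hx hcells
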